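/- (Space bound on the underlying graph) For any execution of the graph-rewriting machine consisting of n transitions from the initial state Init(G_0), of which n_σ are σ-labelled, the size (number of nodes and links) of the underlying graph G_n of the resulting state satisfies |G_n| ≤ (n_σ + 1)·|G_0| (hence |G_n| ≤ (n+1)·|G_0|). -/

import Mathlib

/-!  A term calculus with sub-machine semantics (Muroya & Ghica,
"The Dynamic Geometry of Interaction Machine").

Terms: `t ::= x | λx.t | t @n u | t @l u | t @r u | t[x←u]`,
possibly containing occurrences of a "window" `⌈·⌉`.
An *enriched* term contains exactly one window. -/

/-- Labels of basic rules / reductions: β, σ and ε. -/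
inductive RLabel : Type
  | beta | sigma | eps
deriving DecidableEq

/-- Terms-with-window of the calculus: variables, abstraction, the three
application constructors (call-by-need `@n`, left-to-right call-by-value `@l`,
right-to-left call-by-value `@r`), explicit substitutions `t[x←u]`,
and the window `⌈t⌉`. -/
inductive TermW : Type
  | var : String → TermW
  | lam : String → TermW → TermW
  | appN : TermW → TermW → TermW
  | appL : TermW → TermW → TermW
  | appR : TermW → TermW → TermW
  | esub : TermW → String → TermW → TermW
  | win : TermW → TermW
deriving DecidableEq

namespace TermW

/-- The number of occurrences of the window `⌈·⌉`. -/
def windows : TermW → ℕ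
  | var _ => 0
  | lam _ t => windows t
  | appN t u | appL t u | appR t u => windows t + windows u
  | esub t _ u => windows t + windows u
  | win t => windows t + 1

/-- The number of explicit substitutions. -/
def esubs : TermW → ℕ
  | var _ => 0
  | lam _ t => esubs t
  | appN t u | appL t u | appR t u => esubs t + esubs u
  | esub t _ u => esubs t + esubs u + 1
  | win t => esubs t

/-- The size `|t|` of a term (windows are transparent). -/
def size : TermW → ℕ
  | var _ => 1
  | lam _ t => size t + 1
  | appN t u | appL t u | appR t u => size t + size u + 1
  | esub t _ u => size t + size u + 1
  | win t => size t

/-- The multiset of free variables of a term. -/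
def fv : TermW → Multiset String
  | var x => {x}
  | lam x t => (fv t).filter (· ≠ x)
  | appN t u | appL t u | appR t u => fv t + fv u
  | esub t x u => (fv t).filter (· ≠ x) + fv u
  | win t => fv t

/-- Number of call-by-need applications `@n`. -/
def countN : TermW → ℕ
  | var _ => 0
  | lam _ t => countN t
  | appN t u => countN t + countN u + 1
  | appL t u | appR t u => countN t + countN u
  | esub t _ u => countN t + countN u
  | win t => countN t

/-- Number of left-to-right call-by-value applications `@l`. -/
def countL : TermW → ℕ
  | var _ => 0
  | lam _ t => countL t
  | appL t u => countL t + countL u + 1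
  | appN t u | appR t u => countL t + countL u
  | esub t _ u => countL t + countL u
  | win t => countL t

/-- Number of right-to-left call-by-value applications `@r`. -/
def countR : TermW → ℕ
  | var _ => 0
  | lam _ t => countR t
  | appR t u => countR t + countR u + 1
  | appN t u | appL t u => countR t + countR u
  | esub t _ u => countR t + countR u
  | win t => countR t

/-- A term is *pure* if it is an ordinary term (no window) with no explicit
substitutions. -/
def Pure (t : TermW) : Prop := esubs t = 0 ∧ windows t = 0

/-- A term is *closed* if it has no free variables. -/
def Closed (t : TermW) : Prop := fv t = 0

/-- A term contains function applications of a single strategy. -/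
def Uniform (t : TermW) : Prop :=
  (countL t = 0 ∧ countR t = 0) ∨ (countN t = 0 ∧ countR t = 0) ∨
    (countN t = 0 ∧ countL t = 0)

end TermW

/-- Answer contexts `A ::= ⟨·⟩ | A[x←t]`. -/
inductive ACtx : Type
  | hole : ACtx
  | sub : ACtx → String → TermW → ACtx

/-- Plugging a term into an answer context. -/
def ACtx.plug : ACtx → TermW → TermW
  | .hole, t => t
  | .sub A x u, t => .esub (A.plug t) x u

/-- Evaluation contexts
`E ::= ⟨·⟩ | E[x←t] | E'⟨x⟩[x←E] | E @n t | E @l t | A⟨v⟩ @l E | t @r E | E @r A⟨v⟩`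
(values `v = λy.b` are given by their components). -/
inductive ECtx : Type
  | hole : ECtx
  | sub : ECtx → String → TermW → ECtx
  | look : ECtx → String → ECtx → ECtx
  | apN : ECtx → TermW → ECtx
  | apLfun : ECtx → TermW → ECtx
  | apLarg : ACtx → String → TermW → ECtx → ECtx
  | apRarg : TermW → ECtx → ECtx
  | apRfun : ECtx → ACtx → String → TermW → ECtx

/-- Plugging a term into an evaluation context. -/
def ECtx.plug : ECtx → TermW → TermW
  | .hole, s => s
  | .sub E x t, s => .esub (E.plug s) x t
  | .look E' x E, s => .esub (E'.plug (.var x)) x (E.plug s)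
  | .apN E t, s => .appN (E.plug s) t
  | .apLfun E t, s => .appL (E.plug s) t
  | .apLarg A y b E, s => .appL (A.plug (.lam y b)) (E.plug s)
  | .apRarg t E, s => .appR t (E.plug s)
  | .apRfun E A y b, s => .appR (E.plug s) (A.plug (.lam y b))

/-- Plugging an evaluation context into (the hole of) an evaluation context. -/
def ECtx.comp : ECtx → ECtx → ECtx
  | .hole, F => F
  | .sub E x t, F => .sub (E.comp F) x t
  | .look E' x E, F => .look E' x (E.comp F)
  | .apN E t, F => .apN (E.comp F) t
  | .apLfun E t, F => .apLfun (E.comp F) t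
  | .apLarg A y b E, F => .apLarg A y b (E.comp F)
  | .apRarg t E, F => .apRarg t (E.comp F)
  | .apRfun E A y b, F => .apRfun (E.comp F) A y b

/-- The map `FV_M` of evaluation contexts to multisets of free variables,
relative to a multiset `M` of variables for the hole. -/
def ECtx.fvc : ECtx → Multiset String → Multiset String
  | .hole, M => M
  | .sub E x t, M => ((E.fvc M).filter (· ≠ x)) + t.fv
  | .look E' x E, M => ((E'.plug (.var x)).fv.filter (· ≠ x)) + E.fvc M
  | .apN E t, M => E.fvc M + t.fv
  | .apLfun E t, M => E.fvc M + t.fv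
  | .apLarg A y b E, M => (A.plug (.lam y b)).fv + E.fvc M
  | .apRarg t E, M => t.fv + E.fvc M
  | .apRfun E A y b, M => E.fvc M + (A.plug (.lam y b)).fv

/-- `E.Captures y` holds iff the hole of `E` occurs under a binder of `y`,
i.e. inside the left sub-context of some `[y←·]` construct. -/
def ECtx.Captures : ECtx → String → Prop
  | .hole, _ => False
  | .sub E x _, y => y = x ∨ E.Captures y
  | .look _ _ E, y => E.Captures y
  | .apN E _, y => E.Captures y
  | .apLfun E _, y => E.Captures y
  | .apLarg _ _ _ E, y => E.Captures y
  | .apRarg _ E, y => E.Captures y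
  | .apRfun E _ _ _, y => E.Captures y

/-- Embedding of answer contexts into evaluation contexts. -/
def ACtx.toE : ACtx → ECtx
  | .hole => .hole
  | .sub A x t => .sub A.toE x t

/-- The ten basic rules `↦β, ↦σ, ↦ε` of the sub-machine semantics. -/
inductive BStep : RLabel → TermW → TermW → Prop
  | r1 (t u : TermW) :
      BStep .eps (.win (.appN t u)) (.appN (.win t) u)
  | r2 (A : ACtx) (x : String) (t u : TermW) :
      BStep .beta (.appN (A.plug (.win (.lam x t))) u) (A.plug (.esub (.win t) x u))
  | r3 (t u : TermW) :
      BStep .eps (.win (.appL t u)) (.appL (.win t) u)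
  | r4 (A : ACtx) (x : String) (t u : TermW) :
      BStep .eps (.appL (A.plug (.win (.lam x t))) u) (.appL (A.plug (.lam x t)) (.win u))
  | r5 (A : ACtx) (x : String) (t : TermW) (A' : ACtx) (y : String) (v : TermW) :
      BStep .beta (.appL (A.plug (.lam x t)) (A'.plug (.win (.lam y v))))
        (A.plug (.esub (.win t) x (A'.plug (.lam y v))))
  | r6 (t u : TermW) :
      BStep .eps (.win (.appR t u)) (.appR t (.win u))
  | r7 (t : TermW) (A : ACtx) (y : String) (v : TermW) :
      BStep .eps (.appR t (A.plug (.win (.lam y v)))) (.appR (.win t) (A.plug (.lam y v)))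
  | r8 (A : ACtx) (x : String) (t : TermW) (A' : ACtx) (y : String) (v : TermW) :
      BStep .beta (.appR (A.plug (.win (.lam x t))) (A'.plug (.lam y v)))
        (A.plug (.esub (.win t) x (A'.plug (.lam y v))))
  | r9 (E : ECtx) (x : String) (A : ACtx) (u : TermW) :
      BStep .eps (.esub (E.plug (.win (.var x))) x (A.plug u))
        (.esub (E.plug (.var x)) x (A.plug (.win u)))
  | r10 (E : ECtx) (x : String) (A : ACtx) (y : String) (v : TermW) :
      BStep .sigma (.esub (E.plug (.var x)) x (A.plug (.win (.lam y v))))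
        (A.plug (.esub (E.plug (.win (.lam y v))) x (.lam y v)))

/-- De Bruijn skeletons, used to define alpha-equivalence. -/
inductive DBT : Type
  | fvar : String → DBT
  | bvar : ℕ → DBT
  | lam : DBT → DBT
  | appN : DBT → DBT → DBT
  | appL : DBT → DBT → DBT
  | appR : DBT → DBT → DBT
  | esub : DBT → DBT → DBT
  | win : DBT → DBT
deriving DecidableEq

/-- Conversion to de Bruijn representation relative to a list of binders. -/
def TermW.toDB : TermW → List String → DBT
  | .var x, Γ =>
      match Γ.idxOf? x with
      | some n => .bvar n
      | none => .fvar x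
  | .lam x t, Γ => .lam (t.toDB (x :: Γ))
  | .appN t u, Γ => .appN (t.toDB Γ) (u.toDB Γ)
  | .appL t u, Γ => .appL (t.toDB Γ) (u.toDB Γ)
  | .appR t u, Γ => .appR (t.toDB Γ) (u.toDB Γ)
  | .esub t x u, Γ => .esub (t.toDB (x :: Γ)) (u.toDB Γ)
  | .win t, Γ => .win (t.toDB Γ)

/-- Alpha-equivalence of terms-with-window. -/
def Alpha (t u : TermW) : Prop := t.toDB [] = u.toDB []

/-- Closure of the basic rules under evaluation contexts. -/
def CtxStep (χ : RLabel) (a b : TermW) : Prop :=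
  ∃ (E : ECtx) (t u : TermW), BStep χ t u ∧ a = E.plug t ∧ b = E.plug u

/-- Labelled reduction `⊸χ`: the closure of the basic rules under evaluation
contexts, modulo alpha-equivalence (to avoid variable capture). -/
def Red (χ : RLabel) (a b : TermW) : Prop :=
  ∃ a' b', Alpha a a' ∧ CtxStep χ a' b' ∧ Alpha b' b

/-- Evaluations: labelled reduction sequences of the sub-machine semantics. -/
inductive Evals : TermW → List RLabel → TermW → Prop
  | nil (t : TermW) : Evals t [] t
  | cons {χ : RLabel} {a b c : TermW} {ls : List RLabel} :
      Red χ a b → Evals b ls c → Evals a (χ :: ls) c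
/-!  The token-guided graph-rewriting abstract machine (DGoIM).

Graphs consist of proper nodes (labelled λ, @n, @l, @r, !, ?, D, C_n) and
link nodes, with !-box structures.  Since graphs, boxes and links are a
substantial combinatorial structure, we model the machine as a structure
`DGoIM` over abstract types of graphs, links and !-boxes, whose fields
record exactly the data and the defining properties of the machine:
pass transitions keep the graph and are triggered by rewrite flag `□`;
rewrite transitions are triggered by flags `λ` (β-rewrite, eliminating an
abstraction–application pair) and `!` (ε-rewrite, eliminating the doors of
a !-box, and σ-rewrite, copying a !-box at a contraction node); rewrites
only copy or discard !-boxes, never introduce, expand or reduce one; each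
rewrite pops one element of the box stack and keeps the computation stack;
pass transitions change at most the top elements of the stacks, pushing at
most one element in total; the machine is locally deterministic; rewrites
never introduce edges between two links; and the translations of terms and
evaluation contexts into graphs are recorded abstractly. -/

/-- Token directions `↑`, `↓`. -/
inductive Dir : Type | up | down
deriving DecidableEq

/-- Rewrite flags `□`, `λ`, `!`. -/
inductive RwFlag : Type | noflag | flam | fbang
deriving DecidableEq

/-- Computation-stack symbols `⋆`, `λ`, `@`. -/
inductive CSym : Type | star | clam | cat
deriving DecidableEq

/-- Box-stack symbols `⋆`, `!`, `◇` and links. -/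
inductive BSym (Link : Type) : Type
  | star : BSym Link
  | bang : BSym Link
  | diam : BSym Link
  | link : Link → BSym Link

/-- Token data `(d, f, S, B)`. -/
structure Token (Link : Type) where
  dir : Dir
  flag : RwFlag
  comp : List CSym
  box : List (BSym Link)

/-- A graph state `((G, e), δ)`: a graph with one input and no outputs,
the token position (a link of the graph) and the token data. -/
structure MState (Graph Link : Type) where
  graph : Graph
  pos : Link
  tok : Token Link

/-- Labels of single transitions: pass transitions (ε-labelled) and
β-, ε- and σ-labelled rewrite transitions. -/
inductive TLab : Type | pass | rbeta | reps | rsigma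
deriving DecidableEq

/-- The reduction label of a transition label. -/
def TLab.lab : TLab → RLabel
  | .pass => .eps
  | .rbeta => .beta
  | .reps => .eps
  | .rsigma => .sigma

/-- The token-guided graph-rewriting machine over abstract types of graphs,
links and !-boxes. -/
structure DGoIM (Graph Link Box : Type) where
  /-- the root (unique input link) of a graph -/
  root : Graph → Link
  /-- the size of a graph: its number of nodes and links -/
  gsize : Graph → ℕ
  /-- the !-boxes of a graph -/
  boxesOf : Graph → Set Box
  /-- the size (number of nodes and links) of a !-box -/
  boxSize : Box → ℕ
  /-- the number of auxiliary doors (?-nodes) of a !-box -/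
  auxDoors : Box → ℕ
  /-- `SubgraphBox b g`: the !-box `b` appears as a sub-graph of `g` -/
  SubgraphBox : Box → Graph → Prop
  /-- `NoLinkLink g`: `g` has no edge whose both endpoints are links -/
  NoLinkLink : Graph → Prop
  /-- pass transitions (always ε-labelled) -/
  Pass : MState Graph Link → MState Graph Link → Prop
  /-- β-labelled rewrite transition (eliminating a λ/application pair) -/
  RwBeta : MState Graph Link → MState Graph Link → Prop
  /-- ε-labelled rewrite transition eliminating the doors of the given !-box -/
  RwEps : Box → MState Graph Link → MState Graph Link → Prop
  /-- σ-labelled rewrite transition copying the given !-box -/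
  RwSigma : Box → MState Graph Link → MState Graph Link → Prop
  /-- the translation `t†` of a term into a graph -/
  transTerm : TermW → Graph
  /-- the composed translation `E‡ ∘ t†` (with consecutive links merged) -/
  transPlug : ECtx → TermW → Graph
  /-- the root link of `t†` inside `E‡ ∘ t†` -/
  posOf : ECtx → TermW → Link
  /-- a constant bounding the size of translations -/
  transBound : ℕ
  /- ------ defining properties of the machine ------ -/
  pass_graph : ∀ s s', Pass s s' → s'.graph = s.graph
  pass_flag : ∀ s s', Pass s s' → s.tok.flag = RwFlag.noflag
  pass_det : ∀ s s₁ s₂, Pass s s₁ → Pass s s₂ → s₁ = s₂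
  pass_stack : ∀ s s', Pass s s' →
    s'.tok.comp.length + s'.tok.box.length ≤ s.tok.comp.length + s.tok.box.length + 1
  rwBeta_flag : ∀ s s', RwBeta s s' → s.tok.flag = RwFlag.flam
  rwEps_flag : ∀ b s s', RwEps b s s' → s.tok.flag = RwFlag.fbang
  rwSigma_flag : ∀ b s s', RwSigma b s s' → s.tok.flag = RwFlag.fbang
  rw_det : ∀ s s₁ s₂,
    (RwBeta s s₁ ∨ (∃ b, RwEps b s s₁) ∨ (∃ b, RwSigma b s s₁)) →
    (RwBeta s s₂ ∨ (∃ b, RwEps b s s₂) ∨ (∃ b, RwSigma b s s₂)) → s₁ = s₂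
  rw_stack : ∀ s s',
    (RwBeta s s' ∨ (∃ b, RwEps b s s') ∨ (∃ b, RwSigma b s s')) →
    s'.tok.comp = s.tok.comp ∧ s.tok.box.length = s'.tok.box.length + 1
  rw_boxes : ∀ s s',
    (RwBeta s s' ∨ (∃ b, RwEps b s s') ∨ (∃ b, RwSigma b s s')) →
    boxesOf s'.graph ⊆ boxesOf s.graph
  rwEps_mem : ∀ b s s', RwEps b s s' → b ∈ boxesOf s.graph
  rwSigma_mem : ∀ b s s', RwSigma b s s' → b ∈ boxesOf s.graph
  rwBeta_size : ∀ s s', RwBeta s s' → gsize s'.graph ≤ gsize s.graph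
  rwEps_size : ∀ b s s', RwEps b s s' → gsize s'.graph ≤ gsize s.graph
  rwSigma_size : ∀ b s s', RwSigma b s s' → gsize s'.graph ≤ gsize s.graph + boxSize b
  rw_nolink : ∀ s s',
    (RwBeta s s' ∨ (∃ b, RwEps b s s') ∨ (∃ b, RwSigma b s s')) →
    NoLinkLink s.graph → NoLinkLink s'.graph
  boxes_sub : ∀ g b, b ∈ boxesOf g → SubgraphBox b g
  sub_size : ∀ g b, SubgraphBox b g → boxSize b ≤ gsize g
  aux_le : ∀ b : Box, auxDoors b ≤ boxSize b
  transPlug_hole : ∀ t, transPlug ECtx.hole t = transTerm t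
  posOf_hole : ∀ t, posOf ECtx.hole t = root (transTerm t)
  trans_nolink : ∀ E t, NoLinkLink (transPlug E t)
  trans_size : ∀ t, gsize (transTerm t) ≤ transBound * (TermW.size t + 1)

namespace DGoIM

variable {Graph Link Box : Type}

/-- The initial state `Init(G) = ((G, root), (↑, □, □, ⋆:□))`. -/
def Init (M : DGoIM Graph Link Box) (g : Graph) : MState Graph Link :=
  ⟨g, M.root g, ⟨Dir.up, RwFlag.noflag, [], [BSym.star]⟩⟩

/-- The final state `Final(G) = ((G, root), (↓, □, □, !:□))`. -/
def Final (M : DGoIM Graph Link Box) (g : Graph) : MState Graph Link :=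
  ⟨g, M.root g, ⟨Dir.down, RwFlag.noflag, [], [BSym.bang]⟩⟩

/-- Single transitions, indexed by transition labels. -/
def TStep (M : DGoIM Graph Link Box) :
    TLab → MState Graph Link → MState Graph Link → Prop
  | .pass, s, s' => M.Pass s s'
  | .rbeta, s, s' => M.RwBeta s s'
  | .reps, s, s' => ∃ b, M.RwEps b s s'
  | .rsigma, s, s' => ∃ b, M.RwSigma b s s'

/-- Single transitions, indexed by reduction labels β, σ, ε. -/
def LStep (M : DGoIM Graph Link Box) (χ : RLabel)
    (s s' : MState Graph Link) : Prop :=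
  ∃ l : TLab, TLab.lab l = χ ∧ M.TStep l s s'

/-- `n` consecutive ε-labelled transitions. -/
def EpsN (M : DGoIM Graph Link Box) :
    ℕ → MState Graph Link → MState Graph Link → Prop
  | 0, s, s' => s = s'
  | n + 1, s, s'' => ∃ s', M.LStep RLabel.eps s s' ∧ M.EpsN n s' s''

/-- Executions: sequences of transitions recording the list of transition
labels and the accumulated time cost (each pass transition and each
β-labelled rewrite transition costs 1; an ε-labelled rewrite transition
costs the number of auxiliary doors of the eliminated !-box; a σ-labelled
rewrite transition costs the size of the copied !-box). -/
inductive Trace (M : DGoIM Graph Link Box) :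
    MState Graph Link → List TLab → ℕ → MState Graph Link → Prop
  | nil (s : MState Graph Link) : Trace M s [] 0 s
  | pass {s s' s'' : MState Graph Link} {ls : List TLab} {c : ℕ} :
      M.Pass s s' → Trace M s' ls c s'' → Trace M s (TLab.pass :: ls) (c + 1) s''
  | rbeta {s s' s'' : MState Graph Link} {ls : List TLab} {c : ℕ} :
      M.RwBeta s s' → Trace M s' ls c s'' → Trace M s (TLab.rbeta :: ls) (c + 1) s''
  | reps {b : Box} {s s' s'' : MState Graph Link} {ls : List TLab} {c : ℕ} :
      M.RwEps b s s' → Trace M s' ls c s'' →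
      Trace M s (TLab.reps :: ls) (c + M.auxDoors b) s''
  | rsigma {b : Box} {s s' s'' : MState Graph Link} {ls : List TLab} {c : ℕ} :
      M.RwSigma b s s' → Trace M s' ls c s'' →
      Trace M s (TLab.rsigma :: ls) (c + M.boxSize b) s''

/-- Executions recording the list of visited states (after the start state). -/
inductive VTrace (M : DGoIM Graph Link Box) :
    MState Graph Link → List (MState Graph Link) → MState Graph Link → Prop
  | nil (s : MState Graph Link) : VTrace M s [] s
  | step {l : TLab} {s s' s'' : MState Graph Link} {π : List (MState Graph Link)} :
      M.TStep l s s' → VTrace M s' π s'' → VTrace M s (s' :: π) s''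

/-- The simulation relation `E⟨⌈t⌉⟩ ≼ ((E‡ ∘ t†, e), (↑, □, S, B))`:
the enriched term is closed; the underlying graph is `E‡ ∘ t†` (which has
no edges between links); the token position is the root link of `t†`; the
token travels upwards with rewrite flag `□`; and there is an execution from
`Init(E‡ ∘ t†)` to the state in which the position appears only in the
last state. -/
def Sim (M : DGoIM Graph Link Box) (E : ECtx) (t : TermW)
    (s : MState Graph Link) : Prop :=
  TermW.Closed (E.plug (TermW.win t)) ∧
  (E.plug (TermW.win t)).windows = 1 ∧
  s.graph = M.transPlug E t ∧
  s.pos = M.posOf E t ∧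
  s.tok.dir = Dir.up ∧
  s.tok.flag = RwFlag.noflag ∧
  M.NoLinkLink (M.transPlug E t) ∧
  ∃ π : List (MState Graph Link),
    M.VTrace (M.Init (M.transPlug E t)) π s ∧
    ∀ q ∈ (M.Init (M.transPlug E t) :: π).dropLast, q.pos ≠ s.pos

end DGoIM

private theorem trace_size_aux {Graph Link Box : Type} (M : DGoIM Graph Link Box)
    (G0 : Graph) :
    ∀ {s0 : MState Graph Link} {ls : List TLab} {c : ℕ} {s : MState Graph Link},
      DGoIM.Trace M s0 ls c s →
      M.boxesOf s0.graph ⊆ M.boxesOf G0 →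
      M.boxesOf s.graph ⊆ M.boxesOf G0 ∧
        M.gsize s.graph ≤ M.gsize s0.graph + ls.count TLab.rsigma * M.gsize G0 := by
  intro s0 ls c s htr
  induction htr with
  | nil s => intro h; exact ⟨h, by simp⟩
  | pass hp _ ih =>
      intro h
      have hg := M.pass_graph _ _ hp
      obtain ⟨h1, h2⟩ := ih (by rw [hg]; exact h)
      refine ⟨h1, ?_⟩
      simpa [List.count_cons, hg] using h2
  | rbeta hb _ ih =>
      intro h
      have hsub := M.rw_boxes _ _ (Or.inl hb)
      obtain ⟨h1, h2⟩ := ih (fun b hb' => h (hsub hb'))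
      refine ⟨h1, ?_⟩
      have hsz := M.rwBeta_size _ _ hb
      rw [List.count_cons_of_ne (by decide)]
      omega
  | reps he _ ih =>
      intro h
      have hsub := M.rw_boxes _ _ (Or.inr (Or.inl ⟨_, he⟩))
      obtain ⟨h1, h2⟩ := ih (fun b hb' => h (hsub hb'))
      refine ⟨h1, ?_⟩
      have hsz := M.rwEps_size _ _ _ he
      rw [List.count_cons_of_ne (by decide)]
      omega
  | @rsigma b s s' s'' ls' c' hs _ ih =>
      intro h
      have hsub := M.rw_boxes _ _ (Or.inr (Or.inr ⟨_, hs⟩))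
      obtain ⟨h1, h2⟩ := ih (fun b hb' => h (hsub hb'))
      refine ⟨h1, ?_⟩
      have hmem : b ∈ M.boxesOf G0 := h (M.rwSigma_mem _ _ _ hs)
      have hbsz : M.boxSize b ≤ M.gsize G0 :=
        M.sub_size _ _ (M.boxes_sub _ _ hmem)
      have hsz := M.rwSigma_size _ _ _ hs
      simp only [List.count_cons, if_pos rfl]
      calc M.gsize s''.graph ≤ M.gsize s'.graph + ls'.count TLab.rsigma * M.gsize G0 := h2
        _ ≤ (M.gsize s.graph + M.boxSize b) + ls'.count TLab.rsigma * M.gsize G0 := by gcongr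
        _ ≤ (M.gsize s.graph + M.gsize G0) + ls'.count TLab.rsigma * M.gsize G0 := by gcongr
        _ = M.gsize s.graph + (ls'.count TLab.rsigma + 1) * M.gsize G0 := by ring

/-- **Space bound on the underlying graph.**  For any execution of `n`
transitions from `Init(G₀)`, of which `n_σ` are σ-labelled, the size of the
underlying graph `G_n` of the resulting state satisfies
`|G_n| ≤ (n_σ + 1)·|G₀|`, hence `|G_n| ≤ (n + 1)·|G₀|`. -/
theorem graph_size_bound {Graph Link Box : Type} (M : DGoIM Graph Link Box)
    (G0 : Graph) (ls : List TLab) (c : ℕ) (s : MState Graph Link)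
    (hexec : DGoIM.Trace M (M.Init G0) ls c s) :
    M.gsize s.graph ≤ (ls.count TLab.rsigma + 1) * M.gsize G0 ∧
    M.gsize s.graph ≤ (ls.length + 1) * M.gsize G0 := by
  obtain ⟨-, h2⟩ := trace_size_aux M G0 hexec (fun b hb => hb)
  have hg : (M.Init G0).graph = G0 := rfl
  rw [hg] at h2
  have h3 : M.gsize s.graph ≤ (ls.count TLab.rsigma + 1) * M.gsize G0 := by
    rw [add_mul, one_mul]; omega
  refine ⟨h3, h3.trans (Nat.mul_le_mul_right _ ?_)⟩
  exact Nat.succ_le_succ List.count_le_length
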